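/- arXiv:1312.7163 — 2 statements merged into one kernel-verified Lean document; each statement's English description precedes it below -/
import Mathlib

section
/- Let V be a nonzero finite-dimensional vector space over an algebraically closed field k, α ∈ GL(V), and v : V → V nilpotent with α ∘ v = v ∘ α. Then there exists a complete flag 0 = V₀ ⊂ V₁ ⊂ ⋯ ⊂ V_n = V (with dim Vᵢ = i) such that α(Vᵢ) = Vᵢ and v(Vᵢ) ⊆ V_{i-1} for all i. In particular, α and v are simultaneously triangularizable with v strictly upper triangular. -/
open Module Submodule

/-- An eigenvector of `α` inside `ker v`. -/
private lemma aux_exists_eigvec {k V : Type*} [Field k] [IsAlgClosed k] [AddCommGroup V]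
    [Module k V] [FiniteDimensional k V] [Nontrivial V]
    (α : V ≃ₗ[k] V) (v : V →ₗ[k] V) (hnil : IsNilpotent v)
    (hcomm : (α : V →ₗ[k] V) ∘ₗ v = v ∘ₗ (α : V →ₗ[k] V)) :
    ∃ w : V, w ≠ 0 ∧ v w = 0 ∧ ∃ c : k, α w = c • w := by
  have hker : LinearMap.ker v ≠ ⊥ := by
    intro h
    obtain ⟨m, hm⟩ := hnil
    have hinj : Function.Injective v := LinearMap.ker_eq_bot.mp h
    have hinj' : Function.Injective (v ^ m) := Module.End.iterate_injective hinj m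
    obtain ⟨x, hx⟩ := exists_ne (0 : V)
    apply hx
    apply hinj'
    rw [hm]; simp
  haveI : Nontrivial (LinearMap.ker v) := Submodule.nontrivial_iff_ne_bot.mpr hker
  have hmaps : ∀ x ∈ LinearMap.ker v, (α : V →ₗ[k] V) x ∈ LinearMap.ker v := by
    intro x hx
    have := DFunLike.congr_fun hcomm x
    simp only [LinearMap.comp_apply] at this
    simp only [LinearMap.mem_ker] at hx ⊢
    rw [← this, hx, map_zero]
  let f : LinearMap.ker v →ₗ[k] LinearMap.ker v := (α : V →ₗ[k] V).restrict hmaps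
  obtain ⟨c, hc⟩ := Module.End.exists_eigenvalue f
  obtain ⟨x, hx⟩ := hc.exists_hasEigenvector
  refine ⟨x, ?_, by simp, c, ?_⟩
  · exact fun h => hx.2 (Subtype.ext h)
  · have := hx.apply_eq_smul
    have h2 := congrArg (Subtype.val) this
    rw [LinearMap.restrict_coe_apply] at h2
    simpa using h2

private lemma aux_finrank_comap {k V : Type*} [Field k] [AddCommGroup V] [Module k V]
    [FiniteDimensional k V] (p : Submodule k V) (S : Submodule k (V ⧸ p)) :
    finrank k (comap p.mkQ S) = finrank k S + finrank k p := by
  set U := comap p.mkQ S with hU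
  have hpU : p ≤ U := le_comap_mkQ p S
  let f : U →ₗ[k] S := (p.mkQ.domRestrict U).codRestrict S (fun x => x.2)
  have hker : LinearMap.ker f = comap U.subtype p := by
    ext x
    simp [f, LinearMap.mem_ker, LinearMap.codRestrict, Submodule.Quotient.mk_eq_zero]
  have hsurj : Function.Surjective f := by
    rintro ⟨s, hs⟩
    obtain ⟨x, rfl⟩ := p.mkQ_surjective s
    exact ⟨⟨x, hs⟩, rfl⟩
  have h1 := LinearMap.finrank_range_add_finrank_ker f
  rw [LinearMap.range_eq_top.mpr hsurj, finrank_top, hker] at h1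
  rw [← h1, (Submodule.comapSubtypeEquivOfLe hpU).finrank_eq]

private lemma aux_map_comap {k V : Type*} [Field k] [AddCommGroup V] [Module k V]
    (p : Submodule k V) (e : V ≃ₗ[k] V) (hp : p.map (e : V →ₗ[k] V) = p)
    (S : Submodule k (V ⧸ p)) :
    (comap p.mkQ S).map (e : V →ₗ[k] V) =
      comap p.mkQ (S.map ((Submodule.Quotient.equiv p p e hp :
        (V ⧸ p) ≃ₗ[k] (V ⧸ p)) : (V ⧸ p) →ₗ[k] (V ⧸ p))) := by
  ext x
  rw [Submodule.mem_map_equiv, Submodule.mem_comap, Submodule.mem_comap,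
    Submodule.mem_map_equiv]
  have : (Submodule.Quotient.equiv p p e hp).symm (p.mkQ x) = p.mkQ (e.symm x) := by
    simp [Submodule.Quotient.equiv_symm, Submodule.Quotient.equiv_apply, Submodule.mapQ_apply]
  rw [this]

private lemma aux_map_le {k V : Type*} [Field k] [AddCommGroup V] [Module k V]
    (p : Submodule k V) (v : V →ₗ[k] V) (hv : p ≤ p.comap v) (S T : Submodule k (V ⧸ p))
    (h : S.map (p.mapQ p v hv) ≤ T) : (comap p.mkQ S).map v ≤ comap p.mkQ T := by
  rintro _ ⟨x, hx, rfl⟩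
  have : p.mapQ p v hv (p.mkQ x) ∈ T := h ⟨p.mkQ x, hx, rfl⟩
  simpa [Submodule.mapQ_apply] using this
private lemma aux_main (k : Type*) [Field k] [IsAlgClosed k] (n : ℕ) :
    ∀ (V : Type u) [AddCommGroup V] [Module k V] [FiniteDimensional k V],
      finrank k V = n → ∀ (α : V ≃ₗ[k] V) (v : V →ₗ[k] V), IsNilpotent v →
      (α : V →ₗ[k] V) ∘ₗ v = v ∘ₗ (α : V →ₗ[k] V) →
      ∃ W : Fin (n + 1) → Submodule k V,
        Monotone W ∧ W 0 = ⊥ ∧ W (Fin.last n) = ⊤ ∧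
        (∀ i, finrank k (W i) = (i : ℕ)) ∧
        (∀ i, (W i).map (α : V →ₗ[k] V) = W i) ∧
        (∀ i : Fin n, (W i.succ).map v ≤ W i.castSucc) := by
  induction n with
  | zero =>
    intro V _ _ _ hV α v _ _
    haveI : Subsingleton V := finrank_zero_iff.mp hV
    refine ⟨fun _ => ⊥, monotone_const, rfl, Subsingleton.elim _ _, ?_, ?_, ?_⟩
    · intro i
      have : (i : ℕ) = 0 := Nat.lt_one_iff.mp i.isLt
      simp [this]
    · intro i; simp
    · intro i; exact absurd i.2 (by omega)
  | succ n ih =>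
    intro V _ _ _ hV α v hnil hcomm
    haveI : Nontrivial V := Module.nontrivial_of_finrank_eq_succ hV
    obtain ⟨w, hw0, hwv, c, hwc⟩ := aux_exists_eigvec α v hnil hcomm
    set p : Submodule k V := k ∙ w with hpdef
    have hp1 : finrank k p = 1 := finrank_span_singleton hw0
    have hc0 : c ≠ 0 := by
      rintro rfl
      exact hw0 (by simpa [hwc] using congrArg α.symm (by simpa using hwc))
    have hαp : p.map (α : V →ₗ[k] V) = p := by
      rw [hpdef, Submodule.map_span, Set.image_singleton,
        show (α : V →ₗ[k] V) w = c • w from hwc,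
        Submodule.span_singleton_smul_eq (isUnit_iff_ne_zero.mpr hc0)]
    have hvp : p ≤ LinearMap.ker v :=
      (Submodule.span_singleton_le_iff_mem w _).mpr (by simpa using hwv)
    have hvcomap : p ≤ p.comap v := fun x hx => by
      have : v x = 0 := hvp hx
      simp [Submodule.mem_comap, this]
    have hQrank : finrank k (V ⧸ p) = n := by
      have := Submodule.finrank_quotient_add_finrank p
      omega
    set eQ := Submodule.Quotient.equiv p p α hαp with heQ
    set vQ := p.mapQ p v hvcomap with hvQ
    have hnilQ : IsNilpotent vQ := by
      obtain ⟨m, hm⟩ := hnil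
      refine ⟨m, ?_⟩
      rw [hvQ, ← Submodule.mapQ_pow p hvcomap m]
      simp [hm]
    have hcommQ : (eQ : (V ⧸ p) →ₗ[k] (V ⧸ p)) ∘ₗ vQ = vQ ∘ₗ (eQ : (V ⧸ p) →ₗ[k] (V ⧸ p)) := by
      apply Submodule.linearMap_qext
      ext x
      have := DFunLike.congr_fun hcomm x
      simp only [LinearMap.comp_apply] at this ⊢
      simp [heQ, hvQ, Submodule.mapQ_apply, Submodule.Quotient.equiv_apply, this]
    obtain ⟨W', hmono', h0', hlast', hrank', hα', hv'⟩ :=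
      ih (V ⧸ p) hQrank eQ vQ hnilQ hcommQ
    refine ⟨Fin.cases ⊥ (fun i => comap p.mkQ (W' i)), ?_, ?_, ?_, ?_, ?_, ?_⟩
    · rw [Fin.monotone_iff_le_succ]
      intro i
      refine Fin.cases ?_ (fun j => ?_) i
      · simp
      · rw [← Fin.succ_castSucc]
        simp only [Fin.cases_succ]
        exact comap_mono (hmono' (Fin.castSucc_lt_succ (i := j)).le)
    · simp
    · rw [← Fin.succ_last]
      simp only [Fin.cases_succ, hlast', comap_top]
    · intro i
      refine Fin.cases ?_ (fun j => ?_) i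
      · exact finrank_bot k V
      · simp only [Fin.cases_succ, Fin.val_succ]
        exact (aux_finrank_comap p (W' j)).trans (by rw [hrank', hp1])
    · intro i
      refine Fin.cases ?_ (fun j => ?_) i
      · simp
      · simp only [Fin.cases_succ]
        rw [aux_map_comap p α hαp (W' j), hα' j]
    · intro i
      refine Fin.cases ?_ (fun j => ?_) i
      · simp only [Fin.cases_succ, Fin.castSucc_zero, Fin.cases_zero]
        rw [h0']
        rintro _ ⟨x, hx, rfl⟩
        have hxp : x ∈ p := by
          simpa [Submodule.Quotient.mk_eq_zero] using hx
        simpa using (hvp hxp : v x = 0)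
      · rw [← Fin.succ_castSucc]
        simp only [Fin.cases_succ]
        exact aux_map_le p v hvcomap _ _ (by rw [← hvQ]; exact hv' j)

/-- A commuting pair (invertible map, nilpotent map) on a nonzero finite-dimensional
vector space over an algebraically closed field preserves a common complete flag, with
the nilpotent map strictly decreasing the flag. -/
theorem commuting_invertible_nilpotent_common_flag
    (k : Type*) [Field k] [IsAlgClosed k]
    (V : Type*) [AddCommGroup V] [Module k V] [FiniteDimensional k V] [Nontrivial V]
    (α : V ≃ₗ[k] V) (v : V →ₗ[k] V)
    (hnil : IsNilpotent v)
    (hcomm : (α : V →ₗ[k] V) ∘ₗ v = v ∘ₗ (α : V →ₗ[k] V)) :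
    ∃ W : Fin (Module.finrank k V + 1) → Submodule k V,
      Monotone W ∧
      W 0 = ⊥ ∧
      W (Fin.last (Module.finrank k V)) = ⊤ ∧
      (∀ i, Module.finrank k (W i) = (i : ℕ)) ∧
      (∀ i, (W i).map (α : V →ₗ[k] V) = W i) ∧
      (∀ i : Fin (Module.finrank k V), (W i.succ).map v ≤ W i.castSucc) := by
  exact aux_main k (Module.finrank k V) V rfl α v hnil hcomm
end

section
/- Let R be a commutative ring and M a finitely generated projective faithful R-module. Then the natural ring map R → Z(End_R(M)) sending r to multiplication by r is an isomorphism onto the center of the endomorphism ring End_R(M). -/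
/-- For a finitely generated projective faithful module `M` over a commutative ring `R`,
the natural map `R → End_R(M)`, `r ↦ (r • ·)`, is injective with image exactly the
center of the endomorphism ring. -/
theorem center_end_of_fg_projective_faithful
    (R : Type*) [CommRing R] (M : Type*) [AddCommGroup M] [Module R M]
    [Module.Finite R M] [Module.Projective R M]
    (hfaithful : ∀ r : R, (∀ m : M, r • m = 0) → r = 0) :
    Function.Injective (algebraMap R (Module.End R M)) ∧
      Set.range (algebraMap R (Module.End R M)) =
        (Subring.center (Module.End R M) : Set (Module.End R M)) := by
  obtain ⟨n, f, g, -, -, hfg⟩ := Module.Finite.exists_comp_eq_id_of_projective R M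
  have hfg' : ∀ m : M, f (g m) = m := fun m => congrFun (congrArg DFunLike.coe hfg) m
  set x : Fin n → M := fun j => f (Pi.single j 1) with hx
  set v : Fin n × Fin n → R := fun p => g (x p.2) p.1 with hv
  set T : Ideal R := Ideal.span (Set.range v) with hT
  -- decomposition of m via the "dual basis"
  have hdecomp : ∀ m : M, m = ∑ j, g m j • x j := by
    intro m
    conv_lhs => rw [← hfg' m]
    have : g m = ∑ j, g m j • (Pi.single j 1 : Fin n → R) := by
      funext i
      simp [Finset.sum_apply, Pi.single_apply, eq_comm]
    rw [this]
    simp only [map_sum, map_smul, hx]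
    refine Finset.sum_congr rfl fun i _ => ?_
    congr 1
    simp [Pi.single_apply, eq_comm]
  have hgd : ∀ (m : M) (i : Fin n), g m i = ∑ j, g m j * v (i, j) := by
    intro m i
    conv_lhs => rw [hdecomp m]
    simp [hv, Finset.sum_apply, mul_comm]
  have hgmem : ∀ (m : M) (i : Fin n), g m i ∈ T := by
    intro m i
    rw [hgd m i]
    exact Ideal.sum_mem _ fun j _ =>
      Ideal.mul_mem_left _ _ (Ideal.subset_span (Set.mem_range_self _))
  -- T is a finitely generated idempotent ideal
  have hTfg : T.FG := by
    rw [hT]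
    exact Submodule.fg_span (Set.finite_range v)
  have hTid : IsIdempotentElem T := by
    show T * T = T
    refine le_antisymm (Ideal.mul_le_left) ?_
    rw [hT]
    refine Ideal.span_le.mpr ?_
    rintro _ ⟨⟨i, j⟩, rfl⟩
    have : v (i, j) = ∑ k, v (k, j) * v (i, k) := hgd (x j) i
    rw [this]
    exact Ideal.sum_mem _ fun k _ =>
      Ideal.mul_mem_mul (Ideal.subset_span (Set.mem_range_self _))
        (Ideal.subset_span (Set.mem_range_self _))
  obtain ⟨e, he, hTe⟩ := (Ideal.isIdempotentElem_iff_of_fg T hTfg).mp hTid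
  -- `1 - e` annihilates `M`, so `e = 1` and `1 ∈ T`
  have hkill : ∀ m : M, (1 - e) • m = 0 := by
    intro m
    have hzero : (1 - e) • g m = 0 := by
      funext i
      obtain ⟨t, ht⟩ := Ideal.mem_span_singleton'.mp (hTe ▸ hgmem m i)
      have : (1 - e) * g m i = 0 := by
        rw [← ht]; linear_combination (-t) * he.eq
      simpa using this
    calc (1 - e) • m = f ((1 - e) • g m) := by rw [map_smul, hfg']
      _ = 0 := by rw [hzero, map_zero]
  have he1 : e = 1 := by
    have := hfaithful (1 - e) hkill
    linear_combination -this
  have hone : (1 : R) ∈ T := by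
    rw [hTe, ← he1]
    exact Submodule.mem_span_singleton_self e
  obtain ⟨a, ha⟩ := Submodule.mem_span_range_iff_exists_fun R |>.mp hone
  constructor
  · rw [injective_iff_map_eq_zero]
    intro r hr
    refine hfaithful r fun m => ?_
    rw [← Module.algebraMap_end_apply R R M r, hr, LinearMap.zero_apply]
  · apply le_antisymm
    · rintro _ ⟨r, rfl⟩
      exact Subring.mem_center_iff.mpr fun ψ => (Algebra.commutes r ψ).symm
    · intro φ hφ
      have hc : ∀ ψ : Module.End R M, ψ * φ = φ * ψ := Subring.mem_center_iff.mp hφ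
      -- key identity: for any functional l and a b : M, l a • φ b = l (φ a) • b
      have key : ∀ (l : M →ₗ[R] R) (a b : M), l a • φ b = l (φ a) • b := by
        intro l a b
        have := congrFun (congrArg DFunLike.coe (hc (l.smulRight b))) a
        simpa [Module.End.mul_apply, map_smul] using this.symm
      refine ⟨∑ p : Fin n × Fin n, a p * g (φ (x p.2)) p.1, ?_⟩
      ext m
      rw [Module.algebraMap_end_apply]
      have : φ m = (1 : R) • φ m := (one_smul R _).symm
      rw [this, ← ha, Finset.sum_smul, Finset.sum_smul]
      refine Finset.sum_congr rfl fun p _ => ?_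
      have hk := key ((LinearMap.proj p.1).comp g) (x p.2) m
      simp only [LinearMap.comp_apply, LinearMap.proj_apply] at hk
      rw [smul_eq_mul, mul_smul, mul_smul]
      exact congrArg (a p • ·) hk.symm
end
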